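/- arXiv:2506.14344 — 7 statements merged into one kernel-verified Lean document; each statement's English description precedes it below -/
import Mathlib

section
/- An ultrafilter W on I × J is a tensor product if and only if for every X ∈ W there exists i ∈ I with X_i ∈ π₂(W). -/
/-- Tensor product of ultrafilters: `X ∈ tensor U V ↔ {i | {j | (i,j) ∈ X} ∈ V} ∈ U`. -/
def tensor {I J : Type*} (U : Ultrafilter I) (V : Ultrafilter J) : Ultrafilter (I × J) :=
  U.bind fun i => V.map fun j => (i, j)

theorem mem_tensor {I J : Type*} {U : Ultrafilter I} {V : Ultrafilter J} {X : Set (I × J)} :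
    X ∈ tensor U V ↔ {i : I | {j : J | (i, j) ∈ X} ∈ V} ∈ U := Iff.rfl

/-! `π₂ (U ⊗ V) = V`, and every member of `U ⊗ V` has a section in `V`. Conversely, if every
member of `W` has a section in `π₂ W`, then the set `A` of `i` whose section lies in `π₂ W` is in
`π₁ W`: otherwise `X ∩ π₁⁻¹(Aᶜ)`, for `X ∈ W`, would be a member of `W` none of whose sections
lies in `π₂ W`. So every member of `W` lies in `π₁ W ⊗ π₂ W`, which forces equality of the two
ultrafilters. -/

section

variable {I J : Type*}

theorem map_snd_tensor (U : Ultrafilter I) (V : Ultrafilter J) :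
    (tensor U V).map Prod.snd = V :=
  Ultrafilter.ext fun Y => show (∀ᶠ _ in (U : Filter I), Y ∈ V) ↔ Y ∈ V from
    Filter.eventually_const

theorem exists_section_mem_of_mem_tensor {U : Ultrafilter I} {V : Ultrafilter J}
    {X : Set (I × J)} (hX : X ∈ tensor U V) : ∃ i, {j | (i, j) ∈ X} ∈ V :=
  Ultrafilter.nonempty_of_mem (mem_tensor.mp hX)

theorem eq_tensor_map_fst_map_snd {W : Ultrafilter (I × J)}
    (h : ∀ X ∈ W, ∃ i, {j | (i, j) ∈ X} ∈ W.map Prod.snd) :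
    W = tensor (W.map Prod.fst) (W.map Prod.snd) := by
  refine (Ultrafilter.eq_of_le fun X hX => ?_).symm
  set A := {i | {j | (i, j) ∈ X} ∈ W.map Prod.snd}
  rw [Ultrafilter.mem_coe, mem_tensor, Ultrafilter.mem_map]
  by_contra hA
  have hY : X ∩ (Prod.fst ⁻¹' A)ᶜ ∈ W :=
    (W : Filter (I × J)).inter_mem hX (Ultrafilter.compl_mem_iff_notMem.mpr hA)
  obtain ⟨i, hi⟩ := h _ hY
  obtain ⟨_, _, hiA⟩ := Ultrafilter.nonempty_of_mem hi
  exact hiA (Filter.mem_of_superset hi fun _ hx => hx.1)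

end

theorem stmt_5 {I J : Type*} (W : Ultrafilter (I × J)) :
    (∃ (U : Ultrafilter I) (V : Ultrafilter J), W = tensor U V) ↔
      ∀ X : Set (I × J), X ∈ W →
        ∃ i : I, {j : J | (i, j) ∈ X} ∈ Ultrafilter.map Prod.snd W := by
  constructor
  · rintro ⟨U, V, rfl⟩ X hX
    rw [map_snd_tensor]
    exact exists_section_mem_of_mem_tensor hX
  · exact fun h => ⟨_, _, eq_tensor_map_fst_map_snd h⟩
end

section
/- Let W be an ultrafilter on I × J whose first projection π₁(W) is non-principal. Then W is a tensor product if and only if for every X ⊆ I × J, whenever X_i ∈ π₂(W) for all but finitely many i ∈ I, then X ∈ W. -/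
section Tensor

variable {I J : Type*}

theorem tensor_map_fst (U : Ultrafilter I) (V : Ultrafilter J) :
    Ultrafilter.map Prod.fst (tensor U V) = U := by
  ext s
  change {i | ∀ᶠ _ in (V : Filter J), i ∈ s} ∈ U ↔ s ∈ U
  simp only [Filter.eventually_const, Set.ofPred_mem_eq]

theorem tensor_map_snd (U : Ultrafilter I) (V : Ultrafilter J) :
    Ultrafilter.map Prod.snd (tensor U V) = V := by
  ext s
  change (∀ᶠ _ in (U : Filter I), s ∈ V) ↔ s ∈ V
  exact Filter.eventually_const

theorem mem_tensor_of_finite_compl {U : Ultrafilter I} {V : Ultrafilter J}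
    (hU : (U : Filter I) ≤ Filter.cofinite) {X : Set (I × J)}
    (hX : {i : I | {j : J | (i, j) ∈ X} ∈ V}ᶜ.Finite) : X ∈ tensor U V :=
  hU (Filter.mem_cofinite.mpr hX)

theorem tensor_map_fst_map_snd_eq {W : Ultrafilter (I × J)}
    (h : ∀ X : Set (I × J), (∀ i, {j : J | (i, j) ∈ X} ∈ Ultrafilter.map Prod.snd W) → X ∈ W) :
    tensor (Ultrafilter.map Prod.fst W) (Ultrafilter.map Prod.snd W) = W := by
  refine (Ultrafilter.eq_of_le fun X hX => ?_).symm
  set A := {i : I | {j : J | (i, j) ∈ X} ∈ Ultrafilter.map Prod.snd W}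
  have hA : Prod.fst ⁻¹' A ∈ W := Ultrafilter.mem_map.mp (mem_tensor.mp hX)
  have hY : X ∪ Prod.fst ⁻¹' Aᶜ ∈ W := by
    refine h _ fun i => ?_
    by_cases hi : i ∈ A
    · exact Filter.mem_of_superset hi fun j hj => Or.inl hj
    · exact Filter.univ_mem' fun j => Or.inr hi
  filter_upwards [hY, hA] with p hpY hpA
  exact hpY.resolve_right (not_not.mpr hpA)

end Tensor

theorem stmt_6 {I J : Type*} (W : Ultrafilter (I × J))
    (hnp : ∀ i : I, Ultrafilter.map Prod.fst W ≠ pure i) :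
    (∃ (U : Ultrafilter I) (V : Ultrafilter J), W = tensor U V) ↔
      ∀ X : Set (I × J),
        ({i : I | {j : J | (i, j) ∈ X} ∈ Ultrafilter.map Prod.snd W}ᶜ).Finite →
          X ∈ W := by
  constructor
  · rintro ⟨U, V, rfl⟩ X hX
    have hU : (U : Filter I) ≤ Filter.cofinite := by
      rw [← tensor_map_fst U V]
      exact (Ultrafilter.le_cofinite_or_eq_pure _).resolve_right fun ⟨i, hi⟩ => hnp i hi
    rw [tensor_map_snd] at hX
    exact mem_tensor_of_finite_compl hU hX
  · intro h
    refine ⟨_, _, (tensor_map_fst_map_snd_eq fun X hX => h X ?_).symm⟩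
    simp [hX]
end

section
/- Let W be an ultrafilter on ℕ × J with π₂(W) countably incomplete. Then W is a tensor product if and only if for every f : J → ℕ such that the image ultrafilter f(π₂(W)) on ℕ is non-principal, the set Γ(f) = {(n,j) ∈ ℕ × J : n < f(j)} belongs to W. -/
/-!
If `W = U ⊗ V` and `f(V)` is non-principal, then `f(V)` contains every `Ioi n`, i.e. every
section `{j | n < f j}` of `Γ(f)` lies in `V`, so `Γ(f) ∈ U ⊗ V`.

Conversely, put `U = π₁(W)` and `V = π₂(W)`; since both are ultrafilters it suffices to show
that every `Y ∈ U ⊗ V` lies in `W`. Given `Y ∈ U ⊗ V`, let `S = {n | Y_n ∈ V} ∈ U`. Countable incompleteness of `V` lets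
us shrink the sets `Y_n` (`n ∈ S`) to a decreasing sequence in `V` with empty intersection, and
then to a function `f : J → ℕ` with `f(V)` non-principal and `{j | n < f j} ⊆ Y_n` for `n ∈ S`.
Now `Γ(f) ∩ π₁⁻¹(S) ∈ W` is contained in `Y`.
-/

theorem Set.exists_lt_iff_mem_of_antitone {α : Type*} {C : ℕ → Set α} (hC : Antitone C)
    (hempty : ⋂ n, C n = ∅) : ∃ f : α → ℕ, ∀ n a, n < f a ↔ a ∈ C n := by
  classical
  have hex : ∀ a, ∃ n, a ∉ C n := fun a => by
    simpa using Set.eq_empty_iff_forall_notMem.mp hempty a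
  refine ⟨fun a => Nat.find (hex a), fun n a => ?_⟩
  rw [Nat.lt_find_iff]
  exact ⟨fun h => not_not.mp (h n le_rfl), fun ha m hm => not_not.mpr (hC hm ha)⟩

namespace Ultrafilter

variable {J : Type*}

def CountablyIncomplete (V : Ultrafilter J) : Prop :=
  ∃ A : ℕ → Set J, (∀ n, A n ∈ V) ∧ (⋂ n, A n) ∉ V

theorem forall_ne_pure_iff_Ioi_mem {U : Ultrafilter ℕ} :
    (∀ n, U ≠ pure n) ↔ ∀ n, Set.Ioi n ∈ U := by
  refine ⟨fun h n => ?_, fun h n hn => lt_irrefl n (hn ▸ h n : Set.Ioi n ∈ pure n)⟩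
  by_contra hn
  rw [← compl_mem_iff_notMem, Set.compl_Ioi] at hn
  obtain ⟨a, -, rfl⟩ := eq_pure_of_finite_mem (Set.finite_Iic n) hn
  exact h a rfl

theorem map_snd_tensor {I : Type*} (U : Ultrafilter I) (V : Ultrafilter J) :
    map Prod.snd (tensor U V) = V :=
  Ultrafilter.ext fun s => show (∀ᶠ _ in (U : Filter I), s ∈ V) ↔ s ∈ V from Filter.eventually_const

theorem CountablyIncomplete.exists_forall_lt_subset {V : Ultrafilter J}
    (hV : V.CountablyIncomplete) {D : ℕ → Set J} (hD : ∀ n, D n ∈ V) :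
    ∃ f : J → ℕ, ∀ n, {j | n < f j} ∈ V ∧ {j | n < f j} ⊆ D n := by
  obtain ⟨A, hA, hAV⟩ := hV
  set C : ℕ → Set J := fun n => (⋂ k ∈ Set.Iic n, A k ∩ D k) \ ⋂ k, A k
  have hC_anti : Antitone C := fun m n hmn =>
    Set.sdiff_subset_sdiff_left (Set.biInter_subset_biInter_left fun k hk => le_trans hk hmn)
  have hC_empty : ⋂ n, C n = ∅ := by
    refine Set.eq_empty_iff_forall_notMem.mpr fun j hj => ?_
    rw [Set.mem_iInter] at hj
    refine (hj 0).2 (Set.mem_iInter.mpr fun n => ?_)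
    exact (Set.mem_iInter₂.mp (hj n).1 n (Set.mem_Iic.mpr le_rfl)).1
  have hCV : ∀ n, C n ∈ V := fun n =>
    Filter.sdiff_mem
      ((Filter.biInter_mem (Set.finite_Iic n)).mpr fun k _ => Filter.inter_mem (hA k) (hD k))
      (compl_mem_iff_notMem.mpr hAV)
  obtain ⟨f, hf⟩ := Set.exists_lt_iff_mem_of_antitone hC_anti hC_empty
  refine ⟨f, fun n => ⟨?_, fun j hj => ?_⟩⟩
  · exact Filter.mem_of_superset (hCV n) fun j hj => (hf n j).mpr hj
  · exact (Set.mem_iInter₂.mp ((hf n j).mp hj).1 n (Set.mem_Iic.mpr le_rfl)).2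

end Ultrafilter

theorem stmt_10 {J : Type*} (W : Ultrafilter (ℕ × J))
    (hci : ∃ A : ℕ → Set J, (∀ n, A n ∈ Ultrafilter.map Prod.snd W) ∧
      (⋂ n, A n) ∉ Ultrafilter.map Prod.snd W) :
    (∃ (U : Ultrafilter ℕ) (V : Ultrafilter J), W = tensor U V) ↔
      ∀ f : J → ℕ,
        (∀ n : ℕ, Ultrafilter.map f (Ultrafilter.map Prod.snd W) ≠ pure n) →
          {p : ℕ × J | p.1 < f p.2} ∈ W := by
  simp only [Ultrafilter.forall_ne_pure_iff_Ioi_mem]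
  constructor
  · rintro ⟨U, V, rfl⟩ f hf
    rw [Ultrafilter.map_snd_tensor] at hf
    exact mem_tensor.mpr (Filter.univ_mem' hf)
  · intro hΓ
    refine ⟨Ultrafilter.map Prod.fst W, Ultrafilter.map Prod.snd W,
      Ultrafilter.eq_of_le fun Y hY => ?_⟩
    set S : Set ℕ := {n | {j | (n, j) ∈ Y} ∈ Ultrafilter.map Prod.snd W}
    have hD : ∀ n, {j | n ∈ S → (n, j) ∈ Y} ∈ Ultrafilter.map Prod.snd W := fun n => by
      by_cases hn : n ∈ S
      · exact Filter.mem_of_superset hn fun j hj _ => hj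
      · exact Filter.univ_mem' fun _ h => absurd h hn
    have hV : (Ultrafilter.map Prod.snd W).CountablyIncomplete := hci
    obtain ⟨f, hf⟩ := hV.exists_forall_lt_subset hD
    filter_upwards [hΓ f fun n => (hf n).1, (hY : Prod.fst ⁻¹' S ∈ W)] with p hp hpS
    exact (hf p.1).2 hp hpS
end

section
/- Let U be a non-principal ultrafilter on ℕ and X ∈ U ⊗ U. Then there exists a strictly increasing sequence h₁ < h₂ < … in ℕ such that (h_i, h_j) ∈ X for all i < j. -/
/-! Let `A` be the set of `i` whose section `{j | (i, j) ∈ X}` lies in `U`; then `A ∈ U`. Any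
finitely many points of `A` have their sections, together with `A`, in `U`, so some further point
of `A` lies in all those sections; choosing such points one after another gives a sequence whose
pairs `(h i, h j)`, `i < j`, lie in `X`. When `U` is non-principal, `{(i, j) | i < j}` belongs to
`U ⊗ U` as well, and intersecting it with `X` makes the sequence strictly increasing. -/

open Filter

theorem exists_seq_forall_lt_mem_of_mem_tensor {α : Type*} {U : Ultrafilter α}
    {X : Set (α × α)} (hX : X ∈ tensor U U) :
    ∃ f : ℕ → α, ∀ m n, m < n → (f m, f n) ∈ X := by
  set A : Set α := {i | {j | (i, j) ∈ X} ∈ U}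
  have hA : A ∈ U := mem_tensor.mp hX
  have extend (s : Finset α) (hs : ∀ x ∈ s, x ∈ A) : ∃ y ∈ A, ∀ x ∈ s, (x, y) ∈ X := by
    have hmem : A ∩ ⋂ x ∈ s, {j | (x, j) ∈ X} ∈ U :=
      inter_mem hA ((biInter_finset_mem s).mpr hs)
    obtain ⟨y, hyA, hyX⟩ := Ultrafilter.nonempty_of_mem hmem
    exact ⟨y, hyA, fun x hx => Set.mem_iInter₂.mp hyX x hx⟩
  obtain ⟨f, -, hf⟩ := exists_seq_of_forall_finset_exists (· ∈ A) (fun x y => (x, y) ∈ X) extend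
  exact ⟨f, hf⟩

theorem lt_mem_tensor_of_le_atTop {α : Type*} [Preorder α] [NoMaxOrder α] {U : Ultrafilter α}
    (hU : (U : Filter α) ≤ atTop) : {p : α × α | p.1 < p.2} ∈ tensor U U :=
  mem_tensor.mpr (univ_mem' fun i => hU (Ioi_mem_atTop i))

theorem Ultrafilter.le_atTop_of_forall_ne_pure {U : Ultrafilter ℕ} (hU : ∀ n, U ≠ pure n) :
    (U : Filter ℕ) ≤ atTop :=
  Nat.cofinite_eq_atTop ▸ U.le_cofinite_or_eq_pure.resolve_right fun ⟨n, hn⟩ => hU n hn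

theorem stmt_12 (U : Ultrafilter ℕ) (hU : ∀ n : ℕ, U ≠ pure n)
    (X : Set (ℕ × ℕ)) (hX : X ∈ tensor U U) :
    ∃ h : ℕ → ℕ, StrictMono h ∧ ∀ i j : ℕ, i < j → (h i, h j) ∈ X := by
  have hlt := lt_mem_tensor_of_le_atTop (Ultrafilter.le_atTop_of_forall_ne_pure hU)
  obtain ⟨h, hh⟩ := exists_seq_forall_lt_mem_of_mem_tensor (inter_mem hX hlt)
  exact ⟨h, fun i j hij => (hh i j hij).2, fun i j hij => (hh i j hij).1⟩
end

section
/- Ramsey's theorem for pairs via ultrafilters: for every finite coloring of the set of pairs {(n,m) ∈ ℕ × ℕ : n < m} into r colors, there exists an infinite set H ⊆ ℕ such that all pairs (h, h') with h < h' both in H have the same color. -/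
/-!
Fix a non-principal ultrafilter `U` on `ℕ`. Its tensor square `U ⊗ U` is an ultrafilter on pairs,
so exactly one colour class `{p | c p = k}` belongs to it, i.e. `∀ᶠ a in U, ∀ᶠ b in U, c (a, b) = k`.
A homogeneous sequence is then picked greedily: each new term is taken from a `U`-large set of
points above all previous terms that have colour `k` with each of them, and the set of candidates
for later terms stays `U`-large because every chosen term `a` satisfies `∀ᶠ b in U, c (a, b) = k`.
-/

open Filter Set

theorem Ultrafilter.exists_eventually_eventually_eq {α β : Type*} [Finite β] (U : Ultrafilter α)
    (c : α × α → β) : ∃ k, ∀ᶠ a in U, ∀ᶠ b in U, c (a, b) = k := by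
  -- `U.bind fun a => U.map (Prod.mk a)` is the tensor square `U ⊗ U`.
  obtain ⟨k, hk⟩ := ((U.bind fun a => U.map (Prod.mk a)).map c).eq_pure_of_finite
  have hmem : {k} ∈ (U.bind fun a => U.map (Prod.mk a)).map c := hk ▸ rfl
  exact ⟨k, hmem⟩

theorem Filter.exists_strictMono_of_eventually_eventually {α : Type*} [Preorder α] [NoMaxOrder α]
    {f : Filter α} [f.NeBot] (hf : f ≤ atTop) {R : α → α → Prop}
    (h : ∀ᶠ a in f, ∀ᶠ b in f, R a b) :
    ∃ φ : ℕ → α, StrictMono φ ∧ ∀ ⦃i j⦄, i < j → R (φ i) (φ j) := by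
  have step : ∀ s ∈ f, ∃ x ∈ s, s ∩ {b | R x b} ∩ Ioi x ∈ f := fun s hs => by
    obtain ⟨x, hxs, hx⟩ := nonempty_of_mem (inter_mem hs h)
    exact ⟨x, hxs, inter_mem (inter_mem hs hx) (hf (Ioi_mem_atTop x))⟩
  have : Nonempty α := nonempty_of_neBot f
  choose! pick hpick_mem hpick_next using step
  -- `T n` are the candidates after `n` choices; the `n`-th term is `pick (T n)`.
  let T : ℕ → Set α := fun n => (fun s => s ∩ {b | R (pick s) b} ∩ Ioi (pick s))^[n] univ
  have hT_succ : ∀ n, T (n + 1) = T n ∩ {b | R (pick (T n)) b} ∩ Ioi (pick (T n)) := fun n =>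
    Function.iterate_succ_apply' _ _ _
  have hT_mem : ∀ n, T n ∈ f := fun n => by
    induction n with
    | zero => exact univ_mem
    | succ n ih => exact hT_succ n ▸ hpick_next _ ih
  have hT_anti : Antitone T := antitone_nat_of_succ_le fun n => by
    rw [hT_succ]
    exact inter_subset_left.trans inter_subset_left
  have hlater : ∀ ⦃i j⦄, i < j → pick (T j) ∈ {b | R (pick (T i)) b} ∩ Ioi (pick (T i)) := by
    intro i j hij
    have hj := hT_anti (Nat.succ_le_of_lt hij) (hpick_mem _ (hT_mem j))
    rw [hT_succ, inter_assoc] at hj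
    exact hj.2
  exact ⟨fun n => pick (T n), fun i j hij => (hlater hij).2, fun i j hij => (hlater hij).1⟩

theorem stmt_14 (r : ℕ) (c : ℕ × ℕ → Fin r) :
    ∃ H : Set ℕ, H.Infinite ∧ ∃ k : Fin r,
      ∀ a ∈ H, ∀ b ∈ H, a < b → c (a, b) = k := by
  obtain ⟨k, hk⟩ := (hyperfilter ℕ).exists_eventually_eventually_eq c
  have hle : (hyperfilter ℕ : Filter ℕ) ≤ atTop := Nat.cofinite_eq_atTop ▸ hyperfilter_le_cofinite
  obtain ⟨φ, hφ, hφk⟩ := exists_strictMono_of_eventually_eventually hle hk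
  refine ⟨range φ, infinite_range_of_injective hφ.injective, k, ?_⟩
  rintro _ ⟨i, rfl⟩ _ ⟨j, rfl⟩ hij
  exact hφk (hφ.lt_iff_lt.mp hij)
end

section
/- Let (a_{n,m}) be a double-indexed bounded real sequence such that ℓ_n := lim_{m→∞} a_{n,m} exists for every n, and let ℓ ∈ ℝ. Then lim_{n→∞} ℓ_n = ℓ if and only if for all non-principal ultrafilters U and V on ℕ, the limit of a_{n,m} along the tensor product U ⊗ V equals ℓ. -/
open Filter Topology

theorem Ultrafilter.le_cofinite_iff_forall_ne_pure {α : Type*} {f : Ultrafilter α} :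
    (f : Filter α) ≤ cofinite ↔ ∀ x, f ≠ pure x := by
  constructor
  · rintro hf x rfl
    simpa using le_cofinite_iff_compl_singleton_mem.mp hf x
  · intro hf
    rcases f.le_cofinite_or_eq_pure with hcof | ⟨x, rfl⟩
    · exact hcof
    · exact absurd rfl (hf x)

section TensorLimit

variable {I J X : Type*} [TopologicalSpace X] {U : Ultrafilter I} {V : Ultrafilter J}
  {a : I → J → X} {l : I → X} {x : X}

theorem tendsto_tensor_of_tendsto (hl : ∀ i, Tendsto (a i) V (𝓝 (l i)))
    (h : Tendsto l U (𝓝 x)) : Tendsto (Function.uncurry a) (tensor U V) (𝓝 x) := by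
  intro s hs
  refine mem_tensor.mpr <| mem_of_superset (h (interior_mem_nhds.mpr hs)) fun i hi => ?_
  exact ((hl i).eventually (isOpen_interior.mem_nhds hi)).mono fun _ hm => interior_subset (s := s) hm

theorem tendsto_of_tendsto_tensor [RegularSpace X] (hl : ∀ i, Tendsto (a i) V (𝓝 (l i)))
    (h : Tendsto (Function.uncurry a) (tensor U V) (𝓝 x)) : Tendsto l U (𝓝 x) := by
  refine (closed_nhds_basis x).tendsto_right_iff.mpr fun s ⟨hs, hsc⟩ => ?_
  filter_upwards [h hs] with i hi
  exact hsc.mem_of_tendsto (hl i) hi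

theorem tendsto_tensor_iff [RegularSpace X] (hl : ∀ i, Tendsto (a i) V (𝓝 (l i))) :
    Tendsto (Function.uncurry a) (tensor U V) (𝓝 x) ↔ Tendsto l U (𝓝 x) :=
  ⟨tendsto_of_tendsto_tensor hl, tendsto_tensor_of_tendsto hl⟩

end TensorLimit

theorem Nat.tendsto_atTop_iff_forall_ultrafilter_ne_pure {X : Type*} [TopologicalSpace X]
    {u : ℕ → X} {x : X} :
    Tendsto u atTop (𝓝 x) ↔ ∀ U : Ultrafilter ℕ, (∀ n, U ≠ pure n) → Tendsto u U (𝓝 x) := by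
  rw [tendsto_iff_ultrafilter, ← Nat.cofinite_eq_atTop]
  simp only [Ultrafilter.le_cofinite_iff_forall_ne_pure]

theorem stmt_17_general (a : ℕ → ℕ → ℝ) (l : ℕ → ℝ) (ℓ : ℝ)
    (hl : ∀ n : ℕ, Filter.Tendsto (a n) Filter.atTop (nhds (l n))) :
    Filter.Tendsto l Filter.atTop (nhds ℓ) ↔
      ∀ U V : Ultrafilter ℕ, (∀ n : ℕ, U ≠ pure n) → (∀ n : ℕ, V ≠ pure n) →
        ∀ ε : ℝ, 0 < ε → {p : ℕ × ℕ | |a p.1 p.2 - ℓ| < ε} ∈ tensor U V := by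
  have hlV (V : Ultrafilter ℕ) (hV : ∀ n, V ≠ pure n) (n : ℕ) : Tendsto (a n) V (𝓝 (l n)) :=
    (hl n).mono_left <| (Ultrafilter.le_cofinite_iff_forall_ne_pure.mpr hV).trans_eq
      Nat.cofinite_eq_atTop
  have hmem_iff (U V : Ultrafilter ℕ) :
      (∀ ε : ℝ, 0 < ε → {p : ℕ × ℕ | |a p.1 p.2 - ℓ| < ε} ∈ tensor U V) ↔
        Tendsto (Function.uncurry a) (tensor U V) (𝓝 ℓ) := by
    simp only [Metric.tendsto_nhds, Real.dist_eq]
    rfl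
  have hyper : ∀ n, hyperfilter ℕ ≠ pure n :=
    Ultrafilter.le_cofinite_iff_forall_ne_pure.mp hyperfilter_le_cofinite
  simp only [hmem_iff, Nat.tendsto_atTop_iff_forall_ultrafilter_ne_pure]
  constructor
  · exact fun h U V hU hV => (tendsto_tensor_iff (hlV V hV)).mpr (h U hU)
  · exact fun h U hU => (tendsto_tensor_iff (hlV _ hyper)).mp (h U _ hU hyper)

theorem stmt_17 (a : ℕ → ℕ → ℝ) (l : ℕ → ℝ) (ℓ : ℝ)
    (hbd : ∃ M : ℝ, ∀ n m, |a n m| ≤ M)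
    (hl : ∀ n : ℕ, Filter.Tendsto (a n) Filter.atTop (nhds (l n))) :
    Filter.Tendsto l Filter.atTop (nhds ℓ) ↔
      ∀ U V : Ultrafilter ℕ, (∀ n : ℕ, U ≠ pure n) → (∀ n : ℕ, V ≠ pure n) →
        ∀ ε : ℝ, 0 < ε → {p : ℕ × ℕ | |a p.1 p.2 - ℓ| < ε} ∈ tensor U V :=
  stmt_17_general a l ℓ hl
end

section
/- Let A ⊆ ℕ. There exist disjoint infinite sets B, C ⊆ ℕ with B + C ⊆ A if and only if there exist distinct non-principal ultrafilters U, V on ℕ with A ∈ (U ⊕ V) ∩ (V ⊕ U). -/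
/-- Pseudo-sum of ultrafilters on ℕ: the image of the tensor product under addition. -/
def oplus (U V : Ultrafilter ℕ) : Ultrafilter ℕ :=
  Ultrafilter.map (fun p : ℕ × ℕ => p.1 + p.2) (tensor U V)

open Filter Set

namespace Ultrafilter

variable {α β : Type*}

theorem le_cofinite_iff_forall_ne_pure_s19 {f : Ultrafilter α} :
    (f : Filter α) ≤ cofinite ↔ ∀ a, f ≠ pure a := by
  refine ⟨fun hf a hfa => ?_, fun hf => ?_⟩
  · have : ({a}ᶜ : Set α) ∈ f := hf (finite_singleton a).compl_mem_cofinite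
    rw [hfa, mem_pure] at this
    exact this rfl
  · obtain hle | ⟨a, rfl⟩ := f.le_cofinite_or_eq_pure
    · exact hle
    · exact absurd rfl (hf a)

theorem exists_le_cofinite_mem {s : Set α} (hs : s.Infinite) :
    ∃ f : Ultrafilter α, (f : Filter α) ≤ cofinite ∧ s ∈ f := by
  have := cofinite_inf_principal_neBot_iff.2 hs
  obtain ⟨f, hf⟩ := exists_le (cofinite ⊓ 𝓟 s)
  exact ⟨f, hf.trans inf_le_left, le_principal_iff.1 (hf.trans inf_le_right)⟩

theorem exists_mem_compl_mem_of_ne {f g : Ultrafilter α} (h : f ≠ g) : ∃ s ∈ f, sᶜ ∈ g := by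
  by_contra! hfg
  exact h (coe_le_coe.1 fun s hs => compl_notMem_iff.1 (hfg s hs)).symm

section Rectangle

variable {U : Ultrafilter α} {V : Ultrafilter β} {R : α → β → Prop} {P : Set α} {Q : Set β}

theorem exists_rectangle_extension (hU : (U : Filter α) ≤ cofinite)
    (hV : (V : Filter β) ≤ cofinite) (hP : P ∈ U) (hQ : Q ∈ V)
    (hPR : ∀ a ∈ P, {b | R a b} ∈ V) (hQR : ∀ b ∈ Q, {a | R a b} ∈ U)
    {F : Finset α} {G : Finset β} (hF : ↑F ⊆ P) (hG : ↑G ⊆ Q) :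
    ∃ a ∈ P, a ∉ F ∧ ∃ b ∈ Q, b ∉ G ∧ R a b ∧ (∀ y ∈ G, R a y) ∧ ∀ x ∈ F, R x b := by
  obtain ⟨a, haP, haF, haG⟩ : ∃ a ∈ P, a ∉ F ∧ ∀ y ∈ G, R a y :=
    (Eventually.and hP <| Eventually.and (hU F.finite_toSet.compl_mem_cofinite) <|
      (eventually_all_finset G).2 fun y hy => hQR y (hG hy)).exists
  obtain ⟨b, hbQ, hbG, hab, hFb⟩ : ∃ b ∈ Q, b ∉ G ∧ R a b ∧ ∀ x ∈ F, R x b :=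
    (Eventually.and hQ <| Eventually.and (hV G.finite_toSet.compl_mem_cofinite) <|
      Eventually.and (hPR a haP) <| (eventually_all_finset F).2 fun x hx => hPR x (hF hx)).exists
  exact ⟨a, haP, haF, b, hbQ, hbG, hab, haG, hFb⟩

theorem exists_infinite_rectangle (hU : (U : Filter α) ≤ cofinite)
    (hV : (V : Filter β) ≤ cofinite) (hP : P ∈ U) (hQ : Q ∈ V)
    (hPR : ∀ a ∈ P, {b | R a b} ∈ V) (hQR : ∀ b ∈ Q, {a | R a b} ∈ U) :
    ∃ B ⊆ P, ∃ C ⊆ Q, B.Infinite ∧ C.Infinite ∧ ∀ a ∈ B, ∀ b ∈ C, R a b := by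
  classical
  let r : α × β → α × β → Prop := fun p q => p.1 ≠ q.1 ∧ p.2 ≠ q.2 ∧ R p.1 q.2 ∧ R q.1 p.2
  have : Std.Symm r := ⟨fun _ _ ⟨h₁, h₂, h₃, h₄⟩ => ⟨h₁.symm, h₂.symm, h₄, h₃⟩⟩
  obtain ⟨f, hf, hfr⟩ := exists_seq_of_forall_finset_exists'
    (fun p => p.1 ∈ P ∧ p.2 ∈ Q ∧ R p.1 p.2) r fun s hs => by
      obtain ⟨a, haP, haF, b, hbQ, hbG, hab, ha, hb⟩ :=
        exists_rectangle_extension hU hV hP hQ hPR hQR (F := s.image Prod.fst)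
          (G := s.image Prod.snd) (by simpa [subset_def] using fun x y h => (hs _ h).1)
          (by simpa [subset_def] using fun x y h => (hs _ h).2.1)
      refine ⟨(a, b), ⟨haP, hbQ, hab⟩, fun p hp => ?_⟩
      have hp₁ : p.1 ∈ s.image Prod.fst := Finset.mem_image_of_mem _ hp
      have hp₂ : p.2 ∈ s.image Prod.snd := Finset.mem_image_of_mem _ hp
      exact ⟨fun h : p.1 = a => haF (h ▸ hp₁), fun h : p.2 = b => hbG (h ▸ hp₂),
        hb p.1 hp₁, ha p.2 hp₂⟩
  refine ⟨range (Prod.fst ∘ f), range_subset_iff.2 fun n => (hf n).1,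
    range (Prod.snd ∘ f), range_subset_iff.2 fun n => (hf n).2.1,
    infinite_range_of_injective fun _ _ h => by_contra fun hmn => (hfr hmn).1 h,
    infinite_range_of_injective fun _ _ h => by_contra fun hmn => (hfr hmn).2.1 h, ?_⟩
  rintro _ ⟨m, rfl⟩ _ ⟨n, rfl⟩
  obtain rfl | hmn := eq_or_ne m n
  · exact (hf m).2.2
  · exact (hfr hmn).2.2.1

end Rectangle

end Ultrafilter

theorem mem_oplus {U V : Ultrafilter ℕ} {A : Set ℕ} :
    A ∈ oplus U V ↔ {n | {m | n + m ∈ A} ∈ V} ∈ U := Iff.rfl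

theorem mem_oplus_of_add_mem {U V : Ultrafilter ℕ} {A B C : Set ℕ} (hB : B ∈ U) (hC : C ∈ V)
    (hBC : ∀ b ∈ B, ∀ c ∈ C, b + c ∈ A) : A ∈ oplus U V :=
  mem_oplus.2 <| mem_of_superset hB fun b hb => mem_of_superset hC (hBC b hb)

theorem stmt_19 (A : Set ℕ) :
    (∃ B C : Set ℕ, B.Infinite ∧ C.Infinite ∧ Disjoint B C ∧
        ∀ b ∈ B, ∀ c ∈ C, b + c ∈ A) ↔
      ∃ U V : Ultrafilter ℕ, U ≠ V ∧ (∀ n : ℕ, U ≠ pure n) ∧ (∀ n : ℕ, V ≠ pure n) ∧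
        A ∈ oplus U V ∧ A ∈ oplus V U := by
  simp only [← Ultrafilter.le_cofinite_iff_forall_ne_pure_s19]
  constructor
  · rintro ⟨B, C, hB, hC, hBC, hA⟩
    obtain ⟨U, hU, hBU⟩ := Ultrafilter.exists_le_cofinite_mem hB
    obtain ⟨V, hV, hCV⟩ := Ultrafilter.exists_le_cofinite_mem hC
    refine ⟨U, V, fun hUV => ?_, hU, hV, mem_oplus_of_add_mem hBU hCV hA,
      mem_oplus_of_add_mem hCV hBU fun c hc b hb => add_comm b c ▸ hA b hb c hc⟩
    subst hUV
    exact (Filter.nonempty_of_mem (inter_mem hBU hCV)).ne_empty hBC.inter_eq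
  · rintro ⟨U, V, hUV, hU, hV, hAUV, hAVU⟩
    obtain ⟨D, hDU, hDV⟩ := Ultrafilter.exists_mem_compl_mem_of_ne hUV
    obtain ⟨B, hB, C, hC, hBinf, hCinf, hA⟩ := Ultrafilter.exists_infinite_rectangle
      (R := fun b c => b + c ∈ A) hU hV (inter_mem hDU (mem_oplus.1 hAUV))
      (inter_mem hDV (mem_oplus.1 hAVU)) (fun _ hb => hb.2) fun c hc =>
        mem_of_superset (hc.2 : {m | c + m ∈ A} ∈ U) fun b (hb : c + b ∈ A) =>
          show b + c ∈ A by rwa [add_comm]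
    exact ⟨B, C, hBinf, hCinf,
      disjoint_compl_right.mono (hB.trans inter_subset_left) (hC.trans inter_subset_left), hA⟩
end
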